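/- arXiv:1903.10056 — 2 statements merged into one kernel-verified Lean document; each statement's English description precedes it below -/
import Mathlib

section
/- Let (A, [·,·]) be a Lie algebra with bilinear product ▷, and define ⟦X,Y⟧ := X ▷ Y − Y ▷ X + [X,Y]. Then (A, [·,·], ▷) is a post-Lie algebra if and only if ⟦·,·⟧ is a Lie bracket and the connection ∇_X Y := X ▷ Y on (A, ⟦·,·⟧) is flat (R = 0) with parallel torsion (∇T = 0), in which case T = −[·,·]. -/
/-! Writing `⟦X,Y⟧ = X ▷ Y − Y ▷ X + [X,Y]`, the torsion of `∇_X Y = X ▷ Y` is identically `−[·,·]`.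
Hence `∇T = 0` says exactly that every `X ▷ ·` is a derivation of `[·,·]`, and expanding
`⟦X,Y⟧ ▷ Z` in the curvature leaves `[X,Y,Z] − [X,Y] ▷ Z`, so `R = 0` is the second post-Lie
axiom. The Jacobi identity for `⟦·,·⟧` is then a consequence of the two axioms together with
skew-symmetry and the Jacobi identity of `[·,·]`. -/

/-- Associator of a bilinear product. -/
def assoc {A : Type*} [AddCommGroup A] (p : A → A → A) (X Y Z : A) : A :=
  p X (p Y Z) - p (p X Y) Z

/-- Associator triple bracket. -/
def tripleBracket {A : Type*} [AddCommGroup A] (p : A → A → A) (X Y Z : A) : A :=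
  assoc p X Y Z - assoc p Y X Z

/-- Commutator bracket of a product. -/
def commProd {A : Type*} [AddCommGroup A] (p : A → A → A) (X Y : A) : A := p X Y - p Y X

/-- Cyclic sum of a trilinear expression. -/
def cyclicSum {A : Type*} [AddCommGroup A] (f : A → A → A → A) (X Y Z : A) : A :=
  f X Y Z + f Y Z X + f Z X Y

section PostLie

variable {K A : Type*} [CommRing K] [AddCommGroup A] [Module K A]

def postLieBracket (b p : A →ₗ[K] A →ₗ[K] A) (X Y : A) : A := p X Y - p Y X + b X Y

variable (b p : A →ₗ[K] A →ₗ[K] A)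

theorem sub_sub_postLieBracket (X Y : A) : p X Y - p Y X - postLieBracket b p X Y = -b X Y := by
  rw [postLieBracket]
  abel

theorem curvature_postLieBracket_eq_zero_iff (X Y Z : A) :
    p X (p Y Z) - p Y (p X Z) - p (postLieBracket b p X Y) Z = 0 ↔
      p (b X Y) Z = tripleBracket (fun X Y => p X Y) X Y Z := by
  rw [← sub_eq_zero (a := p (b X Y) Z)]
  simp only [postLieBracket, tripleBracket, assoc, map_add, map_sub, LinearMap.add_apply,
    LinearMap.sub_apply]
  constructor <;> intro h <;> linear_combination (norm := module) -h

theorem covariantDeriv_neg_eq_zero_iff (Z X Y : A) :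
    p Z (-b X Y) - -b (p Z X) Y - -b X (p Z Y) = 0 ↔ p Z (b X Y) = b (p Z X) Y + b X (p Z Y) := by
  rw [map_neg, ← sub_eq_zero (a := p Z (b X Y))]
  constructor <;> intro h <;> linear_combination (norm := module) -h

theorem postLieBracket_jacobi (hskew : ∀ X Y : A, b X Y = - b Y X)
    (hjac : ∀ X Y Z : A, b X (b Y Z) + b Y (b Z X) + b Z (b X Y) = 0)
    (hder : ∀ X Y Z : A, p X (b Y Z) = b (p X Y) Z + b Y (p X Z))
    (htri : ∀ X Y Z : A, p (b X Y) Z = tripleBracket (fun X Y => p X Y) X Y Z) (X Y Z : A) :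
    postLieBracket b p X (postLieBracket b p Y Z) + postLieBracket b p Y (postLieBracket b p Z X)
      + postLieBracket b p Z (postLieBracket b p X Y) = 0 := by
  simp only [postLieBracket, tripleBracket, assoc, map_add, map_sub, LinearMap.add_apply,
    LinearMap.sub_apply] at htri ⊢
  linear_combination (norm := module) hder X Y Z + hder Y Z X + hder Z X Y
    - htri Y Z X - htri Z X Y - htri X Y Z
    + hskew (p X Y) Z + hskew (p Y Z) X + hskew (p Z X) Y + hjac X Y Z

end PostLie

theorem postLie_iff_flat_parallel_torsion_general {K : Type*} [Field K]
    {A : Type*} [AddCommGroup A] [Module K A]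
    (b : A →ₗ[K] A →ₗ[K] A) (p : A →ₗ[K] A →ₗ[K] A)
    (hskew : ∀ X Y : A, b X Y = - b Y X)
    (hjac : ∀ X Y Z : A, b X (b Y Z) + b Y (b Z X) + b Z (b X Y) = 0) :
    -- the bracket ⟦X,Y⟧ := X ▷ Y − Y ▷ X + [X,Y]
    (let br : A → A → A := fun X Y => p X Y - p Y X + b X Y
     -- torsion and curvature of ∇_X Y := X ▷ Y with respect to ⟦·,·⟧
     let T : A → A → A := fun X Y => p X Y - p Y X - br X Y
     let R : A → A → A → A := fun X Y Z => p X (p Y Z) - p Y (p X Z) - p (br X Y) Z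
     let covT : A → A → A → A := fun Z X Y => p Z (T X Y) - T (p Z X) Y - T X (p Z Y)
     ((∀ X Y Z : A,
         p X (b Y Z) = b (p X Y) Z + b Y (p X Z) ∧
         p (b X Y) Z = tripleBracket (fun X Y => p X Y) X Y Z) ↔
        ((∀ X Y Z : A, br X (br Y Z) + br Y (br Z X) + br Z (br X Y) = 0) ∧
         (∀ X Y Z : A, R X Y Z = 0) ∧
         (∀ Z X Y : A, covT Z X Y = 0))) ∧
     (∀ X Y : A, T X Y = - b X Y)) := by
  intro br T R covT
  have hT : ∀ X Y, T X Y = -b X Y := sub_sub_postLieBracket b p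
  have hflat : ∀ X Y Z, R X Y Z = 0 ↔ p (b X Y) Z = tripleBracket (fun X Y => p X Y) X Y Z :=
    curvature_postLieBracket_eq_zero_iff b p
  have hparallel : ∀ Z X Y, covT Z X Y = 0 ↔ p Z (b X Y) = b (p Z X) Y + b X (p Z Y) :=
    fun Z X Y => by
      simp only [covT, hT]
      exact covariantDeriv_neg_eq_zero_iff b p Z X Y
  refine ⟨⟨fun h => ⟨?_, fun X Y Z => (hflat X Y Z).2 (h X Y Z).2,
    fun Z X Y => (hparallel Z X Y).2 (h Z X Y).1⟩,
    fun ⟨_, hR, hcovT⟩ X Y Z => ⟨(hparallel X Y Z).1 (hcovT X Y Z), (hflat X Y Z).1 (hR X Y Z)⟩⟩, hT⟩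
  exact postLieBracket_jacobi b p hskew hjac (fun X Y Z => (h X Y Z).1) (fun X Y Z => (h X Y Z).2)

/-- Post-Lie iff `⟦·,·⟧` is a Lie bracket and `∇` is flat with parallel torsion;
in which case `T = −[·,·]`. -/
theorem postLie_iff_flat_parallel_torsion {K : Type*} [Field K] [CharZero K]
    {A : Type*} [AddCommGroup A] [Module K A]
    (b : A →ₗ[K] A →ₗ[K] A) (p : A →ₗ[K] A →ₗ[K] A)
    (hskew : ∀ X Y : A, b X Y = - b Y X)
    (hjac : ∀ X Y Z : A, b X (b Y Z) + b Y (b Z X) + b Z (b X Y) = 0) :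
    -- the bracket ⟦X,Y⟧ := X ▷ Y − Y ▷ X + [X,Y]
    (let br : A → A → A := fun X Y => p X Y - p Y X + b X Y
     -- torsion and curvature of ∇_X Y := X ▷ Y with respect to ⟦·,·⟧
     let T : A → A → A := fun X Y => p X Y - p Y X - br X Y
     let R : A → A → A → A := fun X Y Z => p X (p Y Z) - p Y (p X Z) - p (br X Y) Z
     let covT : A → A → A → A := fun Z X Y => p Z (T X Y) - T (p Z X) Y - T X (p Z Y)
     ((∀ X Y Z : A,
         p X (b Y Z) = b (p X Y) Z + b Y (p X Z) ∧
         p (b X Y) Z = tripleBracket (fun X Y => p X Y) X Y Z) ↔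
        ((∀ X Y Z : A, br X (br Y Z) + br Y (br Z X) + br Z (br X Y) = 0) ∧
         (∀ X Y Z : A, R X Y Z = 0) ∧
         (∀ Z X Y : A, covT Z X Y = 0))) ∧
     (∀ X Y : A, T X Y = - b X Y)) :=
  postLie_iff_flat_parallel_torsion_general b p hskew hjac
end

section
/- Let (A, [·,·]) be a Lie algebra with bilinear product ▷, define ⟦X,Y⟧ := X ▷ Y − Y ▷ X + [X,Y], and suppose ⟦·,·⟧ is a Lie bracket with ∇_X Y := X ▷ Y. Then (A, [·,·], ▷) is post-Lie if and only if both ∇ and its dual connection ∇̄_X Y := ∇_Y X + ⟦X,Y⟧ are flat. -/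
def curvature {A : Type*} [AddCommGroup A] (D br : A → A → A) (X Y Z : A) : A :=
  D X (D Y Z) - D Y (D X Z) - D (br X Y) Z

theorem eq_zero_of_symmetric_of_antisymmetric {α M : Type*} [AddGroup M] [IsAddTorsionFree M]
    {D : α → α → α → M} (hsymm : ∀ x y z, D x y z = D y x z) (hanti : ∀ x y z, D x y z = -D x z y)
    (x y z : α) : D x y z = 0 := by
  refine self_eq_neg.mp ?_
  calc D x y z = -D x z y := hanti x y z
    _ = -D z x y := by rw [hsymm]
    _ = D z y x := by rw [hanti, neg_neg]
    _ = D y z x := hsymm z y x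
    _ = -D y x z := hanti y z x
    _ = -D x y z := by rw [hsymm]

section BilinearMaps

variable {K A : Type*} [CommRing K] [AddCommGroup A] [Module K A] (b p : A →ₗ[K] A →ₗ[K] A)

def derivationDefect (X Y Z : A) : A :=
  p X (b Y Z) - b (p X Y) Z - b Y (p X Z)

theorem derivationDefect_eq_zero_iff (X Y Z : A) :
    derivationDefect b p X Y Z = 0 ↔ p X (b Y Z) = b (p X Y) Z + b Y (p X Z) := by
  rw [derivationDefect, sub_sub, sub_eq_zero]

theorem derivationDefect_antisymm (hskew : ∀ X Y : A, b X Y = -b Y X) (X Y Z : A) :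
    derivationDefect b p X Y Z = -derivationDefect b p X Z Y := by
  simp only [derivationDefect]
  rw [hskew Z Y, map_neg, hskew (p X Z) Y, hskew Z (p X Y)]
  abel

theorem curvature_eq_zero_iff_tripleBracket (X Y Z : A) :
    curvature (fun X Y => p X Y) (fun X Y => p X Y - p Y X + b X Y) X Y Z = 0 ↔
      p (b X Y) Z = tripleBracket (fun X Y => p X Y) X Y Z := by
  have hexpand : curvature (fun X Y => p X Y) (fun X Y => p X Y - p Y X + b X Y) X Y Z =
      tripleBracket (fun X Y => p X Y) X Y Z - p (b X Y) Z := by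
    simp only [curvature, tripleBracket, assoc, map_add, map_sub, LinearMap.add_apply,
      LinearMap.sub_apply]
    abel
  rw [hexpand, sub_eq_zero, eq_comm]

theorem curvature_add_eq_add_derivationDefect (hskew : ∀ X Y : A, b X Y = -b Y X)
    (hjac : ∀ X Y Z : A, b X (b Y Z) + b Y (b Z X) + b Z (b X Y) = 0) (X Y Z : A) :
    curvature (fun X Y => p X Y + b X Y) (fun X Y => p X Y - p Y X + b X Y) X Y Z =
      curvature (fun X Y => p X Y) (fun X Y => p X Y - p Y X + b X Y) X Y Z
        + derivationDefect b p X Y Z - derivationDefect b p Y X Z := by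
  have hleibniz : b X (b Y Z) - b Y (b X Z) - b (b X Y) Z = 0 := by
    rw [hskew X Z, map_neg, hskew (b X Y) Z, ← hjac X Y Z]
    abel
  simp only [curvature, derivationDefect, map_add, map_sub, LinearMap.add_apply,
    LinearMap.sub_apply]
  linear_combination (norm := module) hleibniz

end BilinearMaps

theorem postLie_iff_both_flat_general {K : Type*} [Field K] [CharZero K]
    {A : Type*} [AddCommGroup A] [Module K A]
    (b : A →ₗ[K] A →ₗ[K] A) (p : A →ₗ[K] A →ₗ[K] A)
    (hskew : ∀ X Y : A, b X Y = - b Y X)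
    (hjac : ∀ X Y Z : A, b X (b Y Z) + b Y (b Z X) + b Z (b X Y) = 0) :
    (let br : A → A → A := fun X Y => p X Y - p Y X + b X Y
     let dual : A → A → A := fun X Y => p Y X + br X Y
     (∀ X Y Z : A,
        p X (b Y Z) = b (p X Y) Z + b Y (p X Z) ∧
        p (b X Y) Z = tripleBracket (fun X Y => p X Y) X Y Z) ↔
       ((∀ X Y Z : A, p X (p Y Z) - p Y (p X Z) - p (br X Y) Z = 0) ∧
        (∀ X Y Z : A, dual X (dual Y Z) - dual Y (dual X Z) - dual (br X Y) Z = 0))) := by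
  intro br dual
  have hdual : dual = fun X Y => p X Y + b X Y := by
    funext X Y
    simp only [dual, br]
    abel
  have hcurv_dual X Y Z : curvature dual br X Y Z = curvature (fun X Y => p X Y) br X Y Z
      + derivationDefect b p X Y Z - derivationDefect b p Y X Z := by
    rw [hdual]
    exact curvature_add_eq_add_derivationDefect b p hskew hjac X Y Z
  have hflat_iff X Y Z : curvature (fun X Y => p X Y) br X Y Z = 0 ↔
      p (b X Y) Z = tripleBracket (fun X Y => p X Y) X Y Z :=
    curvature_eq_zero_iff_tripleBracket b p X Y Z
  change _ ↔ (∀ X Y Z, curvature (fun X Y => p X Y) br X Y Z = 0) ∧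
    ∀ X Y Z, curvature dual br X Y Z = 0
  simp only [hflat_iff, hcurv_dual]
  constructor
  · intro h
    refine ⟨fun X Y Z => (h X Y Z).2, fun X Y Z => ?_⟩
    rw [(hflat_iff X Y Z).2 (h X Y Z).2,
      (derivationDefect_eq_zero_iff b p X Y Z).2 (h X Y Z).1,
      (derivationDefect_eq_zero_iff b p Y X Z).2 (h Y X Z).1, zero_add, sub_zero]
  · rintro ⟨hflat, hdualflat⟩
    have hsymm X Y Z : derivationDefect b p X Y Z = derivationDefect b p Y X Z := by
      have := hdualflat X Y Z
      rwa [(hflat_iff X Y Z).2 (hflat X Y Z), zero_add, sub_eq_zero] at this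
    have : IsAddTorsionFree A := .of_isTorsionFree K A
    have hD := eq_zero_of_symmetric_of_antisymmetric hsymm (derivationDefect_antisymm b p hskew)
    exact fun X Y Z => ⟨(derivationDefect_eq_zero_iff b p X Y Z).1 (hD X Y Z), hflat X Y Z⟩

/-- Assuming `⟦·,·⟧` is a Lie bracket, post-Lie iff both `∇` and `∇̄` are flat. -/
theorem postLie_iff_both_flat {K : Type*} [Field K] [CharZero K]
    {A : Type*} [AddCommGroup A] [Module K A]
    (b : A →ₗ[K] A →ₗ[K] A) (p : A →ₗ[K] A →ₗ[K] A)
    (hskew : ∀ X Y : A, b X Y = - b Y X)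
    (hjac : ∀ X Y Z : A, b X (b Y Z) + b Y (b Z X) + b Z (b X Y) = 0)
    (hJacBr : ∀ X Y Z : A,
      (fun X Y => p X Y - p Y X + b X Y) X ((fun X Y => p X Y - p Y X + b X Y) Y Z)
      + (fun X Y => p X Y - p Y X + b X Y) Y ((fun X Y => p X Y - p Y X + b X Y) Z X)
      + (fun X Y => p X Y - p Y X + b X Y) Z ((fun X Y => p X Y - p Y X + b X Y) X Y) = 0) :
    (let br : A → A → A := fun X Y => p X Y - p Y X + b X Y
     let dual : A → A → A := fun X Y => p Y X + br X Y
     (∀ X Y Z : A,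
        p X (b Y Z) = b (p X Y) Z + b Y (p X Z) ∧
        p (b X Y) Z = tripleBracket (fun X Y => p X Y) X Y Z) ↔
       ((∀ X Y Z : A, p X (p Y Z) - p Y (p X Z) - p (br X Y) Z = 0) ∧
        (∀ X Y Z : A, dual X (dual Y Z) - dual Y (dual X Z) - dual (br X Y) Z = 0))) :=
  postLie_iff_both_flat_general b p hskew hjac
end
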